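/- arXiv:2412.15130 — 2 statements merged into one kernel-verified Lean document; each statement's English description precedes it below -/
import Mathlib

section
/- Let B, C, D be affinely independent points in Euclidean 3-space with dist(B,C) = dist(C,D) = dist(D,B) = s, s > 0, and let A be a point with dist(A,B) = dist(A,C) = dist(A,D) = a, where s/√3 < a < 2s/√3. Let O be the orthogonal projection of A onto the affine plane spanned by {B, C, D} (so A ≠ O). Then the closed ball of radius a/2 centered at B is disjoint from the line through A and O. -/
/-!
By Pythagoras, `A - O ⟂` the base plane makes `O` equidistant from `B`, `C`, `D`, so `O` is the
circumcentre of the equilateral base and `dist B O ^ 2 = s ^ 2 / 3`. Every point `Q` of the axis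
satisfies `Q - O ⟂ B - O`, hence `dist Q B ^ 2 ≥ dist B O ^ 2 = s ^ 2 / 3 > a ^ 2 / 4`.
-/

open RealInnerProductSpace

section

variable {V P : Type*} [NormedAddCommGroup V] [InnerProductSpace ℝ V] [MetricSpace P]
  [NormedAddTorsor V P]

theorem three_mul_norm_sq_eq_of_mem_span_pair {b c d : V} {s : ℝ}
    (hb : b ∈ Submodule.span ℝ {b - c, b - d}) (hc : ‖c‖ = ‖b‖) (hd : ‖d‖ = ‖b‖)
    (hbc : ‖b - c‖ = s) (hcd : ‖c - d‖ = s) (hdb : ‖d - b‖ = s) :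
    3 * ‖b‖ ^ 2 = s ^ 2 := by
  obtain ⟨x, y, hxy⟩ := Submodule.mem_span_pair.mp hb
  have law_of_cosines : ∀ u v : V, ‖u‖ = ‖b‖ → ‖v‖ = ‖b‖ → ‖u - v‖ = s →
      ⟪u, v⟫ = ‖b‖ ^ 2 - s ^ 2 / 2 := by
    intro u v hu hv huv
    have := norm_sub_sq_real u v
    rw [huv, hu, hv] at this
    linarith
  have ibc := law_of_cosines b c rfl hc hbc
  have icd := law_of_cosines c d hc hd hcd
  have idb := law_of_cosines d b hd rfl hdb
  have eb : ⟪x • (b - c) + y • (b - d), b⟫ = ⟪b, b⟫ := by rw [hxy]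
  have ec : ⟪x • (b - c) + y • (b - d), c⟫ = ⟪b, c⟫ := by rw [hxy]
  have ed : ⟪x • (b - c) + y • (b - d), d⟫ = ⟪b, d⟫ := by rw [hxy]
  simp only [inner_add_left, real_inner_smul_left, inner_sub_left, real_inner_self_eq_norm_sq,
    hc, hd, real_inner_comm b c, real_inner_comm d b, real_inner_comm c d, ibc, icd, idb]
    at eb ec ed
  linear_combination -(eb + ec + ed)

theorem three_mul_dist_sq_eq_of_mem_affineSpan_of_equilateral {B C D O : P} {s : ℝ}
    (hO : O ∈ affineSpan ℝ {B, C, D}) (hC : dist C O = dist B O) (hD : dist D O = dist B O)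
    (hBC : dist B C = s) (hCD : dist C D = s) (hDB : dist D B = s) :
    3 * dist B O ^ 2 = s ^ 2 := by
  have hspan : B -ᵥ O ∈ Submodule.span ℝ {(B -ᵥ O) - (C -ᵥ O), (B -ᵥ O) - (D -ᵥ O)} := by
    have h := AffineSubspace.vsub_mem_direction (mem_affineSpan ℝ (Set.mem_insert B _)) hO
    rwa [direction_affineSpan, vectorSpan_eq_span_vsub_set_left ℝ (Set.mem_insert B _),
      Set.image_insert_eq, Set.image_pair, vsub_self, Submodule.span_insert_zero,
      ← vsub_sub_vsub_cancel_right B C O, ← vsub_sub_vsub_cancel_right B D O] at h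
  simp only [dist_eq_norm_vsub V] at hC hD hBC hCD hDB ⊢
  rw [← vsub_sub_vsub_cancel_right B C O] at hBC
  rw [← vsub_sub_vsub_cancel_right C D O] at hCD
  rw [← vsub_sub_vsub_cancel_right D B O] at hDB
  exact three_mul_norm_sq_eq_of_mem_span_pair hspan hC hD hBC hCD hDB

theorem dist_sq_eq_dist_sq_add_dist_sq_of_inner_vsub_eq_zero {X Y O : P}
    (h : ⟪X -ᵥ O, Y -ᵥ O⟫ = 0) : dist X Y ^ 2 = dist X O ^ 2 + dist Y O ^ 2 := by
  rw [dist_eq_norm_vsub V, dist_eq_norm_vsub V, dist_eq_norm_vsub V,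
    ← vsub_sub_vsub_cancel_right X Y O, norm_sub_sq_real, h]
  ring

theorem inner_vsub_eq_zero_of_mem_affineSpan_pair {A O X Q : P} (hQ : Q ∈ line[ℝ, A, O])
    (h : ⟪A -ᵥ O, X -ᵥ O⟫ = 0) : ⟪Q -ᵥ O, X -ᵥ O⟫ = 0 := by
  have hdir : Q -ᵥ O ∈ vectorSpan ℝ {A, O} := direction_affineSpan ℝ {A, O} ▸
    AffineSubspace.vsub_mem_direction hQ (right_mem_affineSpan_pair ℝ A O)
  obtain ⟨t, ht⟩ := mem_vectorSpan_pair.mp hdir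
  rw [← ht, real_inner_smul_left, h, mul_zero]

end

theorem stmt_2_general (A B C D O : EuclideanSpace ℝ (Fin 3)) (s a : ℝ)
    (hBC : dist B C = s) (hCD : dist C D = s) (hDB : dist D B = s)
    (hAB : dist A B = a) (hAC : dist A C = a) (hAD : dist A D = a)
    (ha_hi : a < 2 * s / Real.sqrt 3)
    (hO_mem : O ∈ affineSpan ℝ ({B, C, D} : Set (EuclideanSpace ℝ (Fin 3))))
    (hO_perp : ∀ v ∈ (affineSpan ℝ ({B, C, D} : Set (EuclideanSpace ℝ (Fin 3)))).direction,
      inner ℝ (A - O) v = (0 : ℝ)) :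
    Disjoint (Metric.closedBall B (a / 2))
      ((affineSpan ℝ ({A, O} : Set (EuclideanSpace ℝ (Fin 3)))) : Set (EuclideanSpace ℝ (Fin 3))) := by
  have hperp : ∀ X ∈ ({B, C, D} : Set (EuclideanSpace ℝ (Fin 3))), ⟪A -ᵥ O, X -ᵥ O⟫ = 0 :=
    fun X hX ↦ hO_perp _ (AffineSubspace.vsub_mem_direction (mem_affineSpan ℝ hX) hO_mem)
  have hfoot : ∀ X ∈ ({B, C, D} : Set (EuclideanSpace ℝ (Fin 3))), dist A X = a →
      dist X O = Real.sqrt (a ^ 2 - dist A O ^ 2) := by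
    intro X hX hAX
    rw [← hAX, dist_sq_eq_dist_sq_add_dist_sq_of_inner_vsub_eq_zero (hperp X hX),
      add_sub_cancel_left, Real.sqrt_sq dist_nonneg]
  have hcircum : 3 * dist B O ^ 2 = s ^ 2 :=
    three_mul_dist_sq_eq_of_mem_affineSpan_of_equilateral hO_mem
      (by rw [hfoot C (by simp) hAC, hfoot B (by simp) hAB])
      (by rw [hfoot D (by simp) hAD, hfoot B (by simp) hAB]) hBC hCD hDB
  have ha : 3 * a ^ 2 < 4 * s ^ 2 := by
    have h := (lt_div_iff₀ (by positivity)).mp ha_hi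
    have := pow_lt_pow_left₀ h (mul_nonneg (hAB ▸ dist_nonneg) (Real.sqrt_nonneg 3)) two_ne_zero
    rw [mul_pow, Real.sq_sqrt (by norm_num), mul_pow] at this
    linarith
  rw [Set.disjoint_left]
  intro Q hQB hQline
  have hQ : dist Q B ^ 2 = dist Q O ^ 2 + dist B O ^ 2 :=
    dist_sq_eq_dist_sq_add_dist_sq_of_inner_vsub_eq_zero
      (inner_vsub_eq_zero_of_mem_affineSpan_pair hQline (hperp B (by simp)))
  have hQB' : dist Q B ≤ a / 2 := Metric.mem_closedBall.mp hQB
  nlinarith [dist_nonneg (x := Q) (y := B), sq_nonneg (dist Q O)]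

/-- For an equilateral-based tetrahedral linkage with base side `s` and lateral
edges `a` with `s/√3 < a < 2s/√3`, the closed ball of radius `a/2` about a base
vertex `B` is disjoint from the axis, i.e., the line through the apex `A` and
its orthogonal projection `O` onto the base plane. -/
theorem stmt_2 (A B C D O : EuclideanSpace ℝ (Fin 3)) (s a : ℝ) (hs : 0 < s)
    (hind : AffineIndependent ℝ ![B, C, D])
    (hBC : dist B C = s) (hCD : dist C D = s) (hDB : dist D B = s)
    (hAB : dist A B = a) (hAC : dist A C = a) (hAD : dist A D = a)
    (ha_lo : s / Real.sqrt 3 < a) (ha_hi : a < 2 * s / Real.sqrt 3)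
    (hO_mem : O ∈ affineSpan ℝ ({B, C, D} : Set (EuclideanSpace ℝ (Fin 3))))
    (hO_perp : ∀ v ∈ (affineSpan ℝ ({B, C, D} : Set (EuclideanSpace ℝ (Fin 3)))).direction,
      inner ℝ (A - O) v = (0 : ℝ)) :
    Disjoint (Metric.closedBall B (a / 2))
      ((affineSpan ℝ ({A, O} : Set (EuclideanSpace ℝ (Fin 3)))) : Set (EuclideanSpace ℝ (Fin 3))) :=
  stmt_2_general A B C D O s a hBC hCD hDB hAB hAC hAD ha_hi hO_mem hO_perp
end

section
/- Let r₀ > 0, X > 0, and let ℓ : ℕ → ℝ be nonnegative with ℓ 0 ≤ 2·r₀ and ℓ (i+1) ≤ 2·(r₀ + Σ_{j=0}^{i} ℓ j) for all i. If Σ_{j=0}^{k−1} ℓ j ≥ X for some k ≥ 1, then 3^k ≥ X/r₀ + 1; equivalently, k ≥ log(1 + X/r₀)/log 3. -/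
open Finset

/-- Knitting-needles lower bound, conclusion: under the recursive chunk-length
bounds, if the first `k ≥ 1` chunks have total length at least `X`, then
`3^k ≥ X/r₀ + 1`; equivalently `k ≥ log(1 + X/r₀)/log 3`. -/
theorem stmt_7 (r₀ X : ℝ) (hr₀ : 0 < r₀) (hX : 0 < X) (ℓ : ℕ → ℝ)
    (hnonneg : ∀ i, 0 ≤ ℓ i)
    (h0 : ℓ 0 ≤ 2 * r₀)
    (hrec : ∀ i, ℓ (i + 1) ≤ 2 * (r₀ + ∑ j ∈ range (i + 1), ℓ j))
    (k : ℕ) (hk : 1 ≤ k)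
    (hsum : X ≤ ∑ j ∈ range k, ℓ j) :
    X / r₀ + 1 ≤ (3 : ℝ) ^ k ∧
    Real.log (1 + X / r₀) / Real.log 3 ≤ (k : ℝ) := by
  have key : ∀ n, r₀ + ∑ j ∈ range n, ℓ j ≤ 3 ^ n * r₀ := by
    intro n
    induction n with
    | zero => simp
    | succ n ih =>
      have hstep : ℓ n ≤ 2 * (r₀ + ∑ j ∈ range n, ℓ j) := by
        cases n with
        | zero => simpa using h0
        | succ m => exact hrec m
      have : r₀ + ∑ j ∈ range (n + 1), ℓ j ≤ 3 * (r₀ + ∑ j ∈ range n, ℓ j) := by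
        rw [Finset.sum_range_succ]; linarith
      calc r₀ + ∑ j ∈ range (n + 1), ℓ j ≤ 3 * (r₀ + ∑ j ∈ range n, ℓ j) := this
        _ ≤ 3 * (3 ^ n * r₀) := by linarith
        _ = 3 ^ (n + 1) * r₀ := by ring
  have h1 : X / r₀ + 1 ≤ (3 : ℝ) ^ k := by
    have := key k
    rw [div_add' _ _ _ hr₀.ne', div_le_iff₀ hr₀]
    linarith
  refine ⟨h1, ?_⟩
  have hlog3 : 0 < Real.log 3 := Real.log_pos (by norm_num)
  rw [div_le_iff₀ hlog3]
  have hpos : 0 < 1 + X / r₀ := by positivity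
  calc Real.log (1 + X / r₀) ≤ Real.log ((3 : ℝ) ^ k) :=
        Real.log_le_log hpos (by linarith)
    _ = k * Real.log 3 := by rw [Real.log_pow]
end
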